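/- Let p be prime and q a prime dividing p - 1, and let b have multiplicative order q modulo p. The semidirect product G = Z_p ⋊_b Z_q with operation (r₁,s₁)·(r₂,s₂) = (r₁ + b^{s₁}r₂, s₁ + s₂) has exactly p + 3 subgroups: the trivial group, G itself, ⟨(1,0)⟩ of order p, and the p cyclic subgroups ⟨(r,1)⟩ of order q for r = 0, …, p-1. -/
import Mathlib


/-- The semidirect-product operation `(r,s)·(r',s') = (r + b^s r', s + s')` on
`Z_p × Z_q`. -/
def mulSD {p q : ℕ} (b : (ZMod p)ˣ) (x y : ZMod p × ZMod q) : ZMod p × ZMod q :=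
  (x.1 + (b : ZMod p) ^ x.2.val * y.1, x.2 + y.2)

/-- A subgroup of `(Z_p ⋊_b Z_q, ·)` as a subset. -/
def IsSubSD {p q : ℕ} (b : (ZMod p)ˣ) (S : Set (ZMod p × ZMod q)) : Prop :=
  ((0, 0) : ZMod p × ZMod q) ∈ S ∧
  (∀ x ∈ S, ∀ y ∈ S, mulSD b x y ∈ S) ∧
  (∀ x ∈ S, ∃ y ∈ S, mulSD b x y = (0, 0) ∧ mulSD b y x = (0, 0))

/-- `powSD b x k` is the `k`-th power of `x` in `(Z_p ⋊_b Z_q, ·)`. -/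
def powSD {p q : ℕ} (b : (ZMod p)ˣ) (x : ZMod p × ZMod q) : ℕ → ZMod p × ZMod q
  | 0 => (0, 0)
  | k + 1 => mulSD b x (powSD b x k)

namespace Stmt17

variable {p q : ℕ}

lemma powB_mod [NeZero q] (b : (ZMod p)ˣ) (hbq : (b : ZMod p) ^ q = 1) (n : ℕ) :
    (b : ZMod p) ^ (n % q) = (b : ZMod p) ^ n := by
  conv_rhs => rw [← Nat.div_add_mod n q]
  rw [pow_add, pow_mul, hbq, one_pow, one_mul]

lemma powB_val_add [NeZero q] (b : (ZMod p)ˣ) (hbq : (b : ZMod p) ^ q = 1) (s t : ZMod q) :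
    (b : ZMod p) ^ ((s + t).val) = (b : ZMod p) ^ s.val * (b : ZMod p) ^ t.val := by
  rw [ZMod.val_add, powB_mod b hbq, pow_add]

lemma mulSD_zero_right (b : (ZMod p)ˣ) (x : ZMod p × ZMod q) :
    mulSD b x (0, 0) = x := by
  simp [mulSD]

lemma mulSD_zero_left [NeZero q] (b : (ZMod p)ˣ) (y : ZMod p × ZMod q) :
    mulSD b (0, 0) y = y := by
  simp [mulSD, ZMod.val_zero]

lemma mulSD_assoc [NeZero q] (b : (ZMod p)ˣ) (hbq : (b : ZMod p) ^ q = 1)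
    (x y z : ZMod p × ZMod q) :
    mulSD b (mulSD b x y) z = mulSD b x (mulSD b y z) := by
  simp only [mulSD, Prod.mk.injEq]
  refine ⟨?_, add_assoc _ _ _⟩
  rw [powB_val_add b hbq]; ring

lemma powSD_add [NeZero q] (b : (ZMod p)ˣ) (hbq : (b : ZMod p) ^ q = 1)
    (x : ZMod p × ZMod q) (j k : ℕ) :
    powSD b x (j + k) = mulSD b (powSD b x j) (powSD b x k) := by
  induction j with
  | zero => rw [Nat.zero_add]; exact (mulSD_zero_left b _).symm
  | succ n ih =>
      rw [Nat.succ_add]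
      show mulSD b x (powSD b x (n + k)) = _
      rw [ih, ← mulSD_assoc b hbq]
      rfl

lemma powSD_eq (b : (ZMod p)ˣ) (x : ZMod p × ZMod q) (k : ℕ) :
    powSD b x k = (x.1 * ∑ i ∈ Finset.range k, ((b : ZMod p) ^ x.2.val) ^ i, k • x.2) := by
  induction k with
  | zero => simp [powSD]
  | succ n ih =>
      show mulSD b x (powSD b x n) = _
      rw [ih]
      simp only [mulSD, Prod.mk.injEq]
      constructor
      · rw [geom_sum_succ]; ring
      · rw [succ_nsmul]; exact add_comm _ _


/-- Geometric sum `1 + b + ... + b^(t.val - 1)`. -/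
def GSD (b : (ZMod p)ˣ) (t : ZMod q) : ZMod p := ∑ i ∈ Finset.range t.val, (b : ZMod p) ^ i

lemma geom_sum_mod [NeZero q] (hp : p.Prime) (b : (ZMod p)ˣ)
    (hbq : (b : ZMod p) ^ q = 1) (hb1 : (b : ZMod p) ≠ 1) (k : ℕ) :
    ∑ i ∈ Finset.range k, (b : ZMod p) ^ i = ∑ i ∈ Finset.range (k % q), (b : ZMod p) ^ i := by
  haveI : Fact p.Prime := ⟨hp⟩
  apply mul_right_cancel₀ (sub_ne_zero.mpr hb1)
  rw [geom_sum_mul, geom_sum_mul, powB_mod b hbq]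

lemma powSD_a0 [NeZero q] (b : (ZMod p)ˣ) (a : ZMod p) (k : ℕ) :
    powSD b (a, (0 : ZMod q)) k = (a * (k : ZMod p), (0 : ZMod q)) := by
  rw [powSD_eq]
  simp [ZMod.val_zero]

lemma powSD_r1 [NeZero q] (hp : p.Prime) (hq2 : 2 ≤ q) (b : (ZMod p)ˣ)
    (hbq : (b : ZMod p) ^ q = 1) (hb1 : (b : ZMod p) ≠ 1) (r : ZMod p) (k : ℕ) :
    powSD b (r, (1 : ZMod q)) k = (r * GSD b (k : ZMod q), (k : ZMod q)) := by
  haveI : Fact (1 < q) := ⟨hq2⟩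
  rw [powSD_eq]
  simp only [ZMod.val_one]
  rw [pow_one, GSD, ZMod.val_natCast, ← geom_sum_mod hp b hbq hb1, nsmul_eq_mul, mul_one]

lemma mem_range_10 [NeZero p] [NeZero q] (b : (ZMod p)ˣ) (x : ZMod p × ZMod q) :
    x ∈ Set.range (powSD b ((1 : ZMod p), (0 : ZMod q))) ↔ x.2 = 0 := by
  constructor
  · rintro ⟨k, rfl⟩
    rw [powSD_a0]
  · intro h
    refine ⟨x.1.val, ?_⟩
    rw [powSD_a0, one_mul, ZMod.natCast_val, ZMod.cast_id, ← h]

lemma mem_range_r1 [NeZero p] [NeZero q] (hp : p.Prime) (hq2 : 2 ≤ q) (b : (ZMod p)ˣ)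
    (hbq : (b : ZMod p) ^ q = 1) (hb1 : (b : ZMod p) ≠ 1) (r : ZMod p)
    (x : ZMod p × ZMod q) :
    x ∈ Set.range (powSD b (r, (1 : ZMod q))) ↔ x.1 = r * GSD b x.2 := by
  constructor
  · rintro ⟨k, rfl⟩
    rw [powSD_r1 hp hq2 b hbq hb1]
  · intro h
    refine ⟨x.2.val, ?_⟩
    rw [powSD_r1 hp hq2 b hbq hb1, ZMod.natCast_val, ZMod.cast_id, ← h]

lemma GSD_zero [NeZero q] (b : (ZMod p)ˣ) : GSD b (0 : ZMod q) = 0 := by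
  simp [GSD, ZMod.val_zero]

lemma GSD_one (hq2 : 2 ≤ q) (b : (ZMod p)ˣ) : GSD b (1 : ZMod q) = 1 := by
  haveI : Fact (1 < q) := ⟨hq2⟩
  simp [GSD, ZMod.val_one]

lemma powSD_dvd_zero [NeZero q] (hp : p.Prime) (b : (ZMod p)ˣ)
    (hbq : (b : ZMod p) ^ q = 1) (x : ZMod p × ZMod q) (m : ℕ) (hm : p * q ∣ m) :
    powSD b x m = (0, 0) := by
  haveI : Fact p.Prime := ⟨hp⟩
  rw [powSD_eq]
  have hqm : q ∣ m := dvd_trans (dvd_mul_left q p) hm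
  have hpm : p ∣ m := dvd_trans (dvd_mul_right p q) hm
  have h2 : m • x.2 = 0 := by
    rw [nsmul_eq_mul, (ZMod.natCast_eq_zero_iff m q).mpr hqm, zero_mul]
  have h1 : (∑ i ∈ Finset.range m, ((b : ZMod p) ^ x.2.val) ^ i) = 0 := by
    set c : ZMod p := (b : ZMod p) ^ x.2.val with hc
    by_cases hc1 : c = 1
    · rw [hc1]
      simp only [one_pow, Finset.sum_const, Finset.card_range, nsmul_eq_mul, mul_one]
      exact (ZMod.natCast_eq_zero_iff m p).mpr hpm
    · apply mul_right_cancel₀ (sub_ne_zero.mpr hc1)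
      rw [geom_sum_mul, zero_mul]
      obtain ⟨d, rfl⟩ := hqm
      rw [hc, ← pow_mul, show x.2.val * (q * d) = q * (x.2.val * d) by ring, pow_mul, hbq,
        one_pow, sub_self]
  rw [h1, mul_zero, h2]


lemma isSubSD_singleton [NeZero q] (b : (ZMod p)ˣ) :
    IsSubSD b {((0 : ZMod p), (0 : ZMod q))} := by
  refine ⟨rfl, ?_, ?_⟩
  · intro x hx y hy
    rw [Set.mem_singleton_iff] at hx hy ⊢
    rw [hx, hy, mulSD_zero_right]
  · intro x hx
    rw [Set.mem_singleton_iff] at hx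
    exact ⟨x, hx, by rw [hx, mulSD_zero_right], by rw [hx, mulSD_zero_right]⟩

lemma isSubSD_univ [NeZero q] (b : (ZMod p)ˣ) (hbq : (b : ZMod p) ^ q = 1) :
    IsSubSD b (Set.univ : Set (ZMod p × ZMod q)) := by
  refine ⟨trivial, fun _ _ _ _ => trivial, ?_⟩
  intro x _
  have key : (b : ZMod p) ^ x.2.val * (b : ZMod p) ^ ((-x.2).val) = 1 := by
    rw [← powB_val_add b hbq, add_neg_cancel, ZMod.val_zero, pow_zero]
  refine ⟨(-((b : ZMod p) ^ ((-x.2).val) * x.1), -x.2), trivial, ?_, ?_⟩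
  · simp only [mulSD, Prod.mk.injEq]
    constructor
    · calc x.1 + (b : ZMod p) ^ x.2.val * -((b : ZMod p) ^ ((-x.2).val) * x.1)
          = x.1 - ((b : ZMod p) ^ x.2.val * (b : ZMod p) ^ ((-x.2).val)) * x.1 := by ring
        _ = 0 := by rw [key, one_mul, sub_self]
    · exact add_neg_cancel x.2
  · simp only [mulSD, Prod.mk.injEq]
    exact ⟨by ring, neg_add_cancel x.2⟩

lemma isSubSD_range [NeZero q] (hp : p.Prime) (hq : q.Prime) (b : (ZMod p)ˣ)
    (hbq : (b : ZMod p) ^ q = 1) (x : ZMod p × ZMod q) :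
    IsSubSD b (Set.range (powSD b x)) := by
  refine ⟨⟨0, rfl⟩, ?_, ?_⟩
  · rintro _ ⟨j, rfl⟩ _ ⟨k, rfl⟩
    exact ⟨j + k, powSD_add b hbq x j k⟩
  · rintro _ ⟨k, rfl⟩
    have hpq : 1 ≤ p * q := Nat.one_le_iff_ne_zero.mpr (Nat.mul_ne_zero hp.ne_zero hq.ne_zero)
    have hk : k ≤ p * q * (k + 1) := le_trans (Nat.le_succ k) (Nat.le_mul_of_pos_left _ hpq)
    refine ⟨powSD b x (p * q * (k + 1) - k), ⟨_, rfl⟩, ?_, ?_⟩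
    · rw [← powSD_add b hbq, show k + (p * q * (k + 1) - k) = p * q * (k + 1) by omega,
        powSD_dvd_zero hp b hbq x _ (dvd_mul_right _ _)]
    · rw [← powSD_add b hbq, show (p * q * (k + 1) - k) + k = p * q * (k + 1) by omega,
        powSD_dvd_zero hp b hbq x _ (dvd_mul_right _ _)]

lemma classify [NeZero p] [NeZero q] (hp : p.Prime) (hq : q.Prime) (b : (ZMod p)ˣ)
    (hbq : (b : ZMod p) ^ q = 1) (hb1 : (b : ZMod p) ≠ 1)
    (S : Set (ZMod p × ZMod q)) (hS : IsSubSD b S) :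
    S = {((0 : ZMod p), (0 : ZMod q))} ∨ S = Set.univ ∨
      S = Set.range (powSD b ((1 : ZMod p), (0 : ZMod q))) ∨
      ∃ r : ZMod p, S = Set.range (powSD b (r, (1 : ZMod q))) := by
  haveI : Fact p.Prime := ⟨hp⟩
  haveI : Fact q.Prime := ⟨hq⟩
  have hq2 : 2 ≤ q := hq.two_le
  obtain ⟨h0, hmul, hinv⟩ := hS
  have hpow : ∀ x ∈ S, ∀ k, powSD b x k ∈ S := by
    intro x hx k
    induction k with
    | zero => exact h0
    | succ n ih => exact hmul x hx _ ih
  have hdiff : ∀ r r' : ZMod p, ∀ s : ZMod q,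
      (r, s) ∈ S → (r', s) ∈ S → ((r - r', (0 : ZMod q)) : ZMod p × ZMod q) ∈ S := by
    intro r r' s hr hr'
    obtain ⟨y, hy, hxy, hyx⟩ := hinv (r', s) hr'
    have h2 : y.2 = -s := by
      have h := congrArg Prod.snd hxy
      simp only [mulSD] at h
      exact eq_neg_of_add_eq_zero_right h
    have h1 : y.1 = -((b : ZMod p) ^ ((-s).val) * r') := by
      have h := congrArg Prod.fst hyx
      simp only [mulSD] at h
      rw [h2] at h
      exact eq_neg_of_add_eq_zero_left h
    have key : (b : ZMod p) ^ s.val * (b : ZMod p) ^ ((-s).val) = 1 := by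
      rw [← powB_val_add b hbq, add_neg_cancel, ZMod.val_zero, pow_zero]
    have hy' : mulSD b (r, s) y = ((r - r', (0 : ZMod q)) : ZMod p × ZMod q) := by
      simp only [mulSD, h1, h2, Prod.mk.injEq]
      constructor
      · calc r + (b : ZMod p) ^ s.val * -((b : ZMod p) ^ ((-s).val) * r')
            = r - ((b : ZMod p) ^ s.val * (b : ZMod p) ^ ((-s).val)) * r' := by ring
          _ = r - r' := by rw [key, one_mul]
      · exact add_neg_cancel s
    have := hmul (r, s) hr y hy
    rwa [hy'] at this
  -- if some (a,0) ∈ S with a ≠ 0, then all (c,0) ∈ S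
  have hall : ∀ a : ZMod p, a ≠ 0 → (a, (0 : ZMod q)) ∈ S → ∀ c : ZMod p,
      ((c, (0 : ZMod q)) : ZMod p × ZMod q) ∈ S := by
    intro a ha haS c
    have := hpow _ haS (a⁻¹ * c).val
    rwa [powSD_a0, ZMod.natCast_val, ZMod.cast_id, ← mul_assoc, mul_inv_cancel₀ ha,
      one_mul] at this
  by_cases hA : ∀ x ∈ S, x.2 = 0
  · by_cases hA0 : ∀ x ∈ S, x = ((0 : ZMod p), (0 : ZMod q))
    · exact Or.inl (Set.eq_singleton_iff_unique_mem.mpr ⟨h0, hA0⟩)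
    · push_neg at hA0
      obtain ⟨x, hxS, hxne⟩ := hA0
      have hx2 : x.2 = 0 := hA x hxS
      have hx1 : x.1 ≠ 0 := by
        intro h
        exact hxne (Prod.ext h hx2)
      have hxS' : ((x.1, (0 : ZMod q)) : ZMod p × ZMod q) ∈ S := by
        rwa [← hx2, Prod.mk.eta]
      refine Or.inr (Or.inr (Or.inl ?_))
      ext z
      rw [mem_range_10]
      constructor
      · exact fun hz => hA z hz
      · intro hz
        have := hall x.1 hx1 hxS' z.1
        rwa [← hz, Prod.mk.eta] at this
  · push_neg at hA
    obtain ⟨x0, hx0S, hx0⟩ := hA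
    -- get an element with second coordinate 1
    have hw := hpow x0 hx0S ((x0.2)⁻¹).val
    rw [powSD_eq] at hw
    have hw2 : ((x0.2)⁻¹).val • x0.2 = 1 := by
      rw [nsmul_eq_mul, ZMod.natCast_val, ZMod.cast_id, inv_mul_cancel₀ hx0]
    rw [hw2] at hw
    set r1 : ZMod p := x0.1 * ∑ i ∈ Finset.range ((x0.2)⁻¹).val, ((b : ZMod p) ^ x0.2.val) ^ i
      with hr1
    -- hw : (r1, 1) ∈ S
    by_cases hB : ∃ a : ZMod p, a ≠ 0 ∧ ((a, (0 : ZMod q)) : ZMod p × ZMod q) ∈ S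
    · obtain ⟨a, ha, haS⟩ := hB
      refine Or.inr (Or.inl ?_)
      ext z
      simp only [Set.mem_univ, iff_true]
      have hwz := hpow _ hw (z.2.val)
      rw [powSD_r1 hp hq2 b hbq hb1, ZMod.natCast_val, ZMod.cast_id] at hwz
      have hc := hall a ha haS (z.1 - r1 * GSD b z.2)
      have := hmul _ hc _ hwz
      simp only [mulSD, ZMod.val_zero, pow_zero, one_mul, zero_add, sub_add_cancel] at this
      rwa [Prod.mk.eta] at this
    · push_neg at hB
      refine Or.inr (Or.inr (Or.inr ⟨r1, ?_⟩))
      ext z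
      rw [mem_range_r1 hp hq2 b hbq hb1]
      constructor
      · intro hz
        have hwz := hpow _ hw (z.2.val)
        rw [powSD_r1 hp hq2 b hbq hb1, ZMod.natCast_val, ZMod.cast_id] at hwz
        have hzS : ((z.1, z.2) : ZMod p × ZMod q) ∈ S := by rwa [Prod.mk.eta]
        have hd := hdiff z.1 (r1 * GSD b z.2) z.2 hzS hwz
        by_contra hne
        have : z.1 - r1 * GSD b z.2 ≠ 0 := sub_ne_zero.mpr hne
        exact this (by by_contra h; exact h (by
          by_contra h'
          exact h' (not_not.mp (fun hh => hh (by
            have := hB _ this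
            exact absurd hd this)))))
      · intro hz
        have hwz := hpow _ hw (z.2.val)
        rw [powSD_r1 hp hq2 b hbq hb1, ZMod.natCast_val, ZMod.cast_id] at hwz
        rw [← hz, Prod.mk.eta] at hwz
        exact hwz

end Stmt17


open Stmt17
/-- For `p, q` prime with `q ∣ p - 1` and `b` of order `q` mod `p`, the
group `Z_p ⋊_b Z_q` has exactly `p + 3` subgroups: the trivial group, the whole group,
`⟨(1,0)⟩` of order `p`, and the `p` cyclic subgroups `⟨(r,1)⟩` of order `q`. -/
theorem stmt17 (p q : ℕ) (hp : p.Prime) (hq : q.Prime) (hqp : q ∣ p - 1)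
    (b : (ZMod p)ˣ) (hb : orderOf b = q) :
    (∀ S : Set (ZMod p × ZMod q), IsSubSD b S ↔
      (S = {((0 : ZMod p), (0 : ZMod q))} ∨ S = Set.univ ∨
        S = Set.range (powSD b ((1 : ZMod p), (0 : ZMod q))) ∨
        ∃ r : ZMod p, S = Set.range (powSD b (r, (1 : ZMod q))))) ∧
    Nat.card {S : Set (ZMod p × ZMod q) // IsSubSD b S} = p + 3 := by
  haveI : Fact p.Prime := ⟨hp⟩
  haveI : Fact q.Prime := ⟨hq⟩
  have hq2 : 2 ≤ q := hq.two_le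
  have hbq : (b : ZMod p) ^ q = 1 := by
    have := pow_orderOf_eq_one b
    rw [hb] at this
    calc (b : ZMod p) ^ q = ((b ^ q : (ZMod p)ˣ) : ZMod p) := by push_cast; ring
      _ = 1 := by rw [this]; rfl
  have hb1 : (b : ZMod p) ≠ 1 := by
    intro h
    have : b = 1 := Units.ext h
    rw [this, orderOf_one] at hb
    omega
  have hiff : ∀ S : Set (ZMod p × ZMod q), IsSubSD b S ↔
      (S = {((0 : ZMod p), (0 : ZMod q))} ∨ S = Set.univ ∨
        S = Set.range (powSD b ((1 : ZMod p), (0 : ZMod q))) ∨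
        ∃ r : ZMod p, S = Set.range (powSD b (r, (1 : ZMod q)))) := by
    intro S
    constructor
    · exact classify hp hq b hbq hb1 S
    · rintro (rfl | rfl | rfl | ⟨r, rfl⟩)
      · exact isSubSD_singleton b
      · exact isSubSD_univ b hbq
      · exact isSubSD_range hp hq b hbq _
      · exact isSubSD_range hp hq b hbq _
  refine ⟨hiff, ?_⟩
  -- the explicit enumeration
  let f : ZMod p ⊕ Fin 3 → {S : Set (ZMod p × ZMod q) // IsSubSD b S} := fun a =>
    match a with
    | Sum.inl r => ⟨Set.range (powSD b (r, (1 : ZMod q))), isSubSD_range hp hq b hbq _⟩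
    | Sum.inr 0 => ⟨{((0 : ZMod p), (0 : ZMod q))}, isSubSD_singleton b⟩
    | Sum.inr 1 => ⟨Set.univ, isSubSD_univ b hbq⟩
    | Sum.inr 2 => ⟨Set.range (powSD b ((1 : ZMod p), (0 : ZMod q))), isSubSD_range hp hq b hbq _⟩
  have hbij : Function.Bijective f := by
    constructor
    · intro a a' h
      have h' : (f a).1 = (f a').1 := by rw [h]
      -- membership test function
      rcases a with r | i <;> rcases a' with r' | i'
      · -- both ranges
        have hmem : (r, (1 : ZMod q)) ∈ (f (Sum.inl r)).1 := by
          rw [mem_range_r1 hp hq2 b hbq hb1]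
          simp [GSD_one hq2]
        rw [h'] at hmem
        rw [mem_range_r1 hp hq2 b hbq hb1] at hmem
        simp only [GSD_one hq2, mul_one] at hmem
        rw [hmem]
      · exfalso
        fin_cases i' <;> simp only [f] at h'
        · have hmem : (r, (1 : ZMod q)) ∈ Set.range (powSD b (r, (1 : ZMod q))) := by
            rw [mem_range_r1 hp hq2 b hbq hb1]; simp [GSD_one hq2]
          rw [h'] at hmem
          rw [Set.mem_singleton_iff, Prod.mk.injEq] at hmem
          exact one_ne_zero hmem.2
        · have hmem : ((r + 1, (1 : ZMod q)) : ZMod p × ZMod q) ∈ Set.univ := trivial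
          rw [← h'] at hmem
          rw [mem_range_r1 hp hq2 b hbq hb1] at hmem
          simp only [GSD_one hq2, mul_one, add_eq_left] at hmem
          exact one_ne_zero hmem
        · have hmem : (((1 : ZMod p), (0 : ZMod q)) : ZMod p × ZMod q) ∈
              Set.range (powSD b ((1 : ZMod p), (0 : ZMod q))) := by
            rw [mem_range_10]
          rw [← h'] at hmem
          rw [mem_range_r1 hp hq2 b hbq hb1] at hmem
          simp only [GSD_zero, mul_zero] at hmem
          exact one_ne_zero hmem
      · exfalso
        fin_cases i <;> simp only [f] at h'
        · have hmem : (r', (1 : ZMod q)) ∈ Set.range (powSD b (r', (1 : ZMod q))) := by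
            rw [mem_range_r1 hp hq2 b hbq hb1]; simp [GSD_one hq2]
          rw [← h'] at hmem
          rw [Set.mem_singleton_iff, Prod.mk.injEq] at hmem
          exact one_ne_zero hmem.2
        · have hmem : ((r' + 1, (1 : ZMod q)) : ZMod p × ZMod q) ∈ Set.univ := trivial
          rw [h'] at hmem
          rw [mem_range_r1 hp hq2 b hbq hb1] at hmem
          simp only [GSD_one hq2, mul_one, add_eq_left] at hmem
          exact one_ne_zero hmem
        · have hmem : (((1 : ZMod p), (0 : ZMod q)) : ZMod p × ZMod q) ∈
              Set.range (powSD b ((1 : ZMod p), (0 : ZMod q))) := by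
            rw [mem_range_10]
          rw [h'] at hmem
          rw [mem_range_r1 hp hq2 b hbq hb1] at hmem
          simp only [GSD_zero, mul_zero] at hmem
          exact one_ne_zero hmem
      · have h01 : ¬ ({((0 : ZMod p), (0 : ZMod q))} : Set (ZMod p × ZMod q)) = Set.univ := by
          intro hE
          have : (((1 : ZMod p), (0 : ZMod q)) : ZMod p × ZMod q) ∈
              ({((0 : ZMod p), (0 : ZMod q))} : Set (ZMod p × ZMod q)) := by
            rw [hE]; trivial
          rw [Set.mem_singleton_iff, Prod.mk.injEq] at this
          exact one_ne_zero this.1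
        have h02 : ¬ ({((0 : ZMod p), (0 : ZMod q))} : Set (ZMod p × ZMod q)) =
            Set.range (powSD b ((1 : ZMod p), (0 : ZMod q))) := by
          intro hE
          have : (((1 : ZMod p), (0 : ZMod q)) : ZMod p × ZMod q) ∈
              ({((0 : ZMod p), (0 : ZMod q))} : Set (ZMod p × ZMod q)) := by
            rw [hE, mem_range_10]
          rw [Set.mem_singleton_iff, Prod.mk.injEq] at this
          exact one_ne_zero this.1
        have h12 : ¬ (Set.univ : Set (ZMod p × ZMod q)) =
            Set.range (powSD b ((1 : ZMod p), (0 : ZMod q))) := by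
          intro hE
          have : (((0 : ZMod p), (1 : ZMod q)) : ZMod p × ZMod q) ∈
              Set.range (powSD b ((1 : ZMod p), (0 : ZMod q))) := by
            rw [← hE]; trivial
          rw [mem_range_10] at this
          exact one_ne_zero this
        fin_cases i <;> fin_cases i' <;> simp only [f] at h' <;>
          first
            | rfl
            | exact absurd h' h01
            | exact absurd h' h02
            | exact absurd h' h12
            | exact absurd h'.symm h01
            | exact absurd h'.symm h02
            | exact absurd h'.symm h12
    · rintro ⟨S, hS⟩
      rcases (hiff S).mp hS with h | h | h | ⟨r, h⟩
      · exact ⟨Sum.inr 0, Subtype.ext h.symm⟩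
      · exact ⟨Sum.inr 1, Subtype.ext h.symm⟩
      · exact ⟨Sum.inr 2, Subtype.ext h.symm⟩
      · exact ⟨Sum.inl r, Subtype.ext h.symm⟩
  calc Nat.card {S : Set (ZMod p × ZMod q) // IsSubSD b S}
      = Nat.card (ZMod p ⊕ Fin 3) := (Nat.card_congr (Equiv.ofBijective f hbij)).symm
    _ = p + 3 := by
        rw [Nat.card_sum, Nat.card_zmod, Nat.card_eq_fintype_card, Fintype.card_fin]
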